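/- Let G be a splittable, f-closed directed graph and let C be a sink of the strict partial order <⊕ on source-equivalence classes of inconsistent edges. Then C⁺ = C^⊕, i.e., ⋂_{R∈C} u_R^{+,R} = ⋂_{R∈C} u_R^⊕. -/

import Mathlib

namespace CQA

variable {V : Type*}

/-- Directed reachability along edges in `A`. -/
def reach (A : Set (V × V)) (u v : V) : Prop :=
  Relation.ReflTransGen (fun x y => (x, y) ∈ A) u v

/-- `u` and `v` are in the same strongly connected component of the graph with edges `E`. -/
def sameSCC (E : Set (V × V)) (u v : V) : Prop := reach E u v ∧ reach E v u

/-- There is an undirected path in `E` from `a` to `b` all of whose vertices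
(including the endpoints) avoid the set `A`. -/
def ureach (E : Set (V × V)) (A : Set V) (a b : V) : Prop :=
  a ∉ A ∧ Relation.ReflTransGen (fun x y => ((x, y) ∈ E ∨ (y, x) ∈ E) ∧ y ∉ A) a b

/-- `u_R^{+,R}`: vertices reachable from the source of `R` in `G − {R}`. -/
def uplus (E : Set (V × V)) (R : V × V) : Set V := {v | reach (E \ {R}) R.1 v}

/-- `u^⊕`: vertices reachable from `u` using only consistent edges `Ec`. -/
def uoplus (Ec : Set (V × V)) (u : V) : Set V := {v | reach Ec u v}

/-- `C` is a source-equivalence class of inconsistent edges `Ei`. -/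
def IsClass (E Ei : Set (V × V)) (C : Set (V × V)) : Prop :=
  ∃ R ∈ Ei, C = {S ∈ Ei | sameSCC E R.1 S.1}

/-- `C^⊕ = ⋂_{R ∈ C} u_R^⊕`. -/
def Coplus (Ec : Set (V × V)) (C : Set (V × V)) : Set V :=
  {v | ∀ R ∈ C, v ∈ uoplus Ec R.1}

/-- `C⁺ = ⋂_{R ∈ C} u_R^{+,R}`. -/
def Cplus (E : Set (V × V)) (C : Set (V × V)) : Set V :=
  {v | ∀ R ∈ C, v ∈ uplus E R}

/-- `C₁ ≤⊕ C₂` iff some `S ∈ C₂` has `u_S ∈ C₁^⊕`. -/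
def leOplus (Ec : Set (V × V)) (C₁ C₂ : Set (V × V)) : Prop :=
  ∃ S ∈ C₂, S.1 ∈ Coplus Ec C₁

/-- The strict order `C₁ <⊕ C₂`. -/
def ltOplus (Ec : Set (V × V)) (C₁ C₂ : Set (V × V)) : Prop :=
  leOplus Ec C₁ C₂ ∧ C₁ ≠ C₂

/-- A sink: a maximal element of `<⊕` among source-equivalence classes. -/
def IsSink (E Ei Ec : Set (V × V)) (C : Set (V × V)) : Prop :=
  IsClass E Ei C ∧ ∀ C', IsClass E Ei C' → ¬ ltOplus Ec C C'

/-- `C' ∈ coupled⊕(C)`. -/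
def coupledOplusCl (E Ec : Set (V × V)) (C C' : Set (V × V)) : Prop :=
  C' = C ∨ ∃ R ∈ C, ∃ S ∈ C', ureach E (Coplus Ec C) R.2 S.1

/-- `C' ∈ coupled⁺(C)`. -/
def coupledPlusCl (E : Set (V × V)) (C C' : Set (V × V)) : Prop :=
  C' = C ∨ ∃ R ∈ C, ∃ S ∈ C', ureach E (Cplus E C) R.2 S.1

/-- `S ∈ coupled⁺(R)` for inconsistent edges `R, S`:
either `S ∈ [R]`, or there is an undirected path `v_R ↔ u_S` avoiding `u_R^{+,R}`. -/
def coupledPlusEdge (E Ei : Set (V × V)) (R S : V × V) : Prop :=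
  S ∈ Ei ∧ (sameSCC E R.1 S.1 ∨ ureach E (uplus E R) R.2 S.1)

/-- `G` is splittable: every coupled pair of inconsistent edges is source-equivalent. -/
def Splittable (E Ec : Set (V × V)) : Prop :=
  ∀ R ∈ E \ Ec, ∀ S ∈ E \ Ec,
    coupledPlusEdge E (E \ Ec) R S → coupledPlusEdge E (E \ Ec) S R → sameSCC E R.1 S.1

/-- `G` is f-closed: for every inconsistent edge `R`,
`v_R^⊕ ∩ u_R^{+,R} ⊆ u_R^⊕`. -/
def FClosed (E Ec : Set (V × V)) : Prop :=
  ∀ R ∈ E \ Ec, ∀ v, v ∈ uoplus Ec R.2 → v ∈ uplus E R → v ∈ uoplus Ec R.1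

end CQA


/-!
Fix `R₀ ∈ C`, so that `C` consists of the inconsistent edges whose source lies in the strongly
connected component of `u_{R₀}`, and every `τ ∈ C⁺` is reachable from `u_{R₀}`. Walking along such
a path we show that every `τ ∈ C⁺` consistently reachable from the current vertex lies in `C^⊕`.
At `u_{R₀}` this is f-closedness, pushed backwards through the component (whose inconsistent
edges all lie in `C`). When the path crosses an inconsistent edge `h = (a, b)` with `τ ∈ b^⊕`
but `τ ∉ a^⊕`, it suffices to show `h ∈ C`, since then f-closedness puts `τ` into `a^⊕`.
If `a ∈ C⁺`, then `a ∈ C^⊕` by induction and `h ∈ C` because `C` is a sink. Otherwise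
`a ∉ u_S^{+,S}` for some `S ∈ C`; leaving `u_S^{+,S}` is only possible through `S` and leaving
`u_h^{+,h}` only through `h`, which makes `S` and `h` coupled both ways, so `h ∈ C` by
splittability.
-/

namespace CQA

variable {V : Type*} {E Ec : Set (V × V)}

theorem sameSCC_refl (E : Set (V × V)) (u : V) : sameSCC E u u := ⟨.refl, .refl⟩

theorem sameSCC.symm {u v : V} (h : sameSCC E u v) : sameSCC E v u := ⟨h.2, h.1⟩

theorem sameSCC.trans {u v w : V} (h₁ : sameSCC E u v) (h₂ : sameSCC E v w) :
    sameSCC E u w :=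
  ⟨h₁.1.trans h₂.1, h₂.2.trans h₁.2⟩

theorem mem_uplus_fst (E : Set (V × V)) (R : V × V) : R.1 ∈ uplus E R := .refl

theorem eq_of_mem_uplus_of_not_mem_uplus {R : V × V} {x y : V} (hx : x ∈ uplus E R)
    (hxy : (x, y) ∈ E) (hy : y ∉ uplus E R) : (x, y) = R := by
  by_contra hne
  exact hy (Relation.ReflTransGen.tail hx ⟨hxy, hne⟩)

theorem reach_fst_of_mem_uplus {F : Set (V × V)} (hF : F ⊆ E) {h : V × V} {x τ : V}
    (hxτ : reach F x τ) (hx : x ∈ uplus E h) (hτ : τ ∉ uplus E h) : reach F x h.1 := by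
  induction hxτ with
  | refl => exact absurd hx hτ
  | @tail w τ hxw hwτ ih =>
    by_cases hw : w ∈ uplus E h
    · rwa [← eq_of_mem_uplus_of_not_mem_uplus hw (hF hwτ) hτ]
    · exact ih hw

theorem ureach.trans {A : Set V} {a b c : V} (h₁ : ureach E A a b) (h₂ : ureach E A b c) :
    ureach E A a c :=
  ⟨h₁.1, h₁.2.trans h₂.2⟩

theorem ureach.symm {A : Set V} {a b : V} (h : ureach E A a b) : ureach E A b a := by
  obtain ⟨ha, hab⟩ := h
  induction hab with
  | refl => exact ⟨ha, .refl⟩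
  | tail _ hcd ih => exact ⟨hcd.2, .head ⟨hcd.1.symm, ih.1⟩ ih.2⟩

theorem ureach_of_reach {F : Set (V × V)} (hF : F ⊆ E) {A : Set V} {a b : V}
    (hab : reach F a b) (hA : ∀ x, reach F a x → reach F x b → x ∉ A) : ureach E A a b := by
  induction hab using Relation.ReflTransGen.head_induction_on with
  | refl => exact ⟨hA _ .refl .refl, .refl⟩
  | head hac hcb ih =>
    have hc := ih fun x hcx hxb => hA x (.head hac hcx) hxb
    exact ⟨hA _ .refl (.head hac hcb), .head ⟨.inl (hF hac), hc.1⟩ hc.2⟩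

/-- The last exit of a path from `u_R` out of `u_R^{+,R}` is through `R` itself. -/
theorem ureach_snd_of_reach {R : V × V} {y : V} (hy : reach E R.1 y) (hyR : y ∉ uplus E R) :
    ureach E (uplus E R) R.2 y := by
  induction hy with
  | refl => exact absurd (mem_uplus_fst E R) hyR
  | @tail w y _ hwy ih =>
    by_cases hw : w ∈ uplus E R
    · obtain rfl := eq_of_mem_uplus_of_not_mem_uplus hw hwy hyR
      exact ⟨hyR, .refl⟩
    · exact ⟨(ih hw).1, (ih hw).2.tail ⟨.inl hwy, hyR⟩⟩

theorem coupledPlusEdge_of_not_reach (hEc : Ec ⊆ E) (hf : FClosed E Ec) {h S : V × V} {τ : V}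
    (hh : h ∈ E \ Ec) (hS : S ∈ E \ Ec) (hτ : reach Ec h.2 τ) (hτ' : ¬ reach Ec h.1 τ)
    (hτS : τ ∈ uplus E S) (hhS : h.1 ∉ uplus E S) : coupledPlusEdge E (E \ Ec) h S := by
  have hτh : τ ∉ uplus E h := fun hτh => hτ' (hf h hh τ hτ hτh)
  have hbτ : ureach E (uplus E h) h.2 τ :=
    ureach_of_reach hEc hτ fun x hx hxτ hxh => hτ' ((hf h hh x hx hxh).trans hxτ)
  have hSτ : ureach E (uplus E h) S.1 τ :=
    ureach_of_reach Set.sdiff_subset hτS fun x hx hxτ hxh =>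
      hhS (hx.trans (reach_fst_of_mem_uplus Set.sdiff_subset hxτ hxh hτh))
  exact ⟨hS, .inr (hbτ.trans hSτ.symm)⟩

theorem Coplus_subset_Cplus (hEc : Ec ⊆ E) {C : Set (V × V)} (hC : ∀ R ∈ C, R ∉ Ec) :
    Coplus Ec C ⊆ Cplus E C := fun _ hv R hR =>
  Relation.ReflTransGen.mono (fun _ _ hab => ⟨hEc hab, fun he => hC R hR (he ▸ hab)⟩) _ _
    (hv R hR)

theorem mem_of_isSink {C : Set (V × V)} (hsink : IsSink E (E \ Ec) Ec C) {h : V × V}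
    (hh : h ∈ E \ Ec) (hh₁ : h.1 ∈ Coplus Ec C) : h ∈ C := by
  set C' := {S ∈ E \ Ec | sameSCC E h.1 S.1}
  have hhC' : h ∈ C' := ⟨hh, sameSCC_refl E h.1⟩
  have hCC' : C = C' := by
    by_contra hne
    exact hsink.2 C' ⟨h, hh, rfl⟩ ⟨⟨h, hhC', hh₁⟩, hne⟩
  exact hCC' ▸ hhC'

section SourceClass

variable {C : Set (V × V)} {R₀ : V × V} (hC : C = {S ∈ E \ Ec | sameSCC E R₀.1 S.1})
include hC

theorem reach_of_sameSCC_of_mem_Cplus (hf : FClosed E Ec) {w u x : V} (hw : w ∈ Cplus E C)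
    (hu : sameSCC E R₀.1 u) (huw : reach Ec u w) (hux : sameSCC E u x) : reach Ec x w := by
  obtain ⟨hux, hxu⟩ := hux
  induction hxu using Relation.ReflTransGen.head_induction_on with
  | refl => exact huw
  | @head a c hac hcu ih =>
    have hcw := ih (hux.tail hac)
    by_cases hcons : (a, c) ∈ Ec
    · exact .head hcons hcw
    · have hacC : (a, c) ∈ C := hC ▸ ⟨⟨hac, hcons⟩, hu.trans ⟨hux, .head hac hcu⟩⟩
      exact hf (a, c) ⟨hac, hcons⟩ w hcw (hw _ hacC)

theorem mem_Coplus_of_sameSCC_of_reach (hf : FClosed E Ec) {w u : V} (hw : w ∈ Cplus E C)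
    (hu : sameSCC E R₀.1 u) (huw : reach Ec u w) : w ∈ Coplus Ec C := by
  intro S hS
  rw [hC] at hS
  exact reach_of_sameSCC_of_mem_Cplus hC hf hw hu huw (hu.symm.trans hS.2)

theorem mem_of_not_mem_uplus (hEc : Ec ⊆ E) (hsp : Splittable E Ec) (hf : FClosed E Ec)
    {S h : V × V} {τ : V} (hS : S ∈ C) (hh : h ∈ E \ Ec) (hR₀h : reach E R₀.1 h.1)
    (hhS : h.1 ∉ uplus E S) (hτ : reach Ec h.2 τ) (hτ' : ¬ reach Ec h.1 τ)
    (hτS : τ ∈ uplus E S) : h ∈ C := by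
  rw [hC] at hS ⊢
  have hSh : coupledPlusEdge E (E \ Ec) S h :=
    ⟨hh, .inr (ureach_snd_of_reach (hS.2.2.trans hR₀h) hhS)⟩
  have hhS' := coupledPlusEdge_of_not_reach hEc hf hh hS.1 hτ hτ' hτS hhS
  exact ⟨hh, hS.2.trans (hsp S hS.1 h hh hSh hhS')⟩

theorem mem_Coplus_of_reach_of_reach (hEc : Ec ⊆ E) (hsp : Splittable E Ec)
    (hf : FClosed E Ec) (hsink : IsSink E (E \ Ec) Ec C) {x τ : V} (hx : reach E R₀.1 x)
    (hτ : τ ∈ Cplus E C) (hxτ : reach Ec x τ) : τ ∈ Coplus Ec C := by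
  induction hx generalizing τ with
  | refl => exact mem_Coplus_of_sameSCC_of_reach hC hf hτ (sameSCC_refl E R₀.1) hxτ
  | @tail a b hR₀a hab ih =>
    by_cases hcons : (a, b) ∈ Ec
    · exact ih hτ (.head hcons hxτ)
    refine ih hτ ?_
    by_contra haτ
    have hh : (a, b) ∈ E \ Ec := ⟨hab, hcons⟩
    have habC : (a, b) ∈ C := by
      by_cases ha : a ∈ Cplus E C
      · exact mem_of_isSink hsink hh (ih ha .refl)
      · obtain ⟨S, hS, haS⟩ : ∃ S ∈ C, a ∉ uplus E S := by simpa [Cplus] using ha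
        exact mem_of_not_mem_uplus hC hEc hsp hf hS hh hR₀a haS hxτ haτ (hτ S hS)
    exact haτ (hf _ hh τ hxτ (hτ _ habC))

end SourceClass

end CQA

open CQA in
theorem stmt_14_general {V : Type*} (E Ec : Set (V × V)) (hEc : Ec ⊆ E)
    (hsp : Splittable E Ec) (hf : FClosed E Ec)
    (C : Set (V × V)) (hsink : IsSink E (E \ Ec) Ec C) :
    Cplus E C = Coplus Ec C := by
  obtain ⟨R₀, hR₀, hC⟩ := hsink.1
  have hCEc : ∀ R ∈ C, R ∉ Ec := fun R hR => by rw [hC] at hR; exact hR.1.2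
  refine Set.Subset.antisymm (fun τ hτ => ?_) (Coplus_subset_Cplus hEc hCEc)
  have hR₀C : R₀ ∈ C := hC ▸ ⟨hR₀, sameSCC_refl E R₀.1⟩
  have hR₀τ : reach E R₀.1 τ := Relation.ReflTransGen.mono (fun _ _ h => h.1) _ _ (hτ R₀ hR₀C)
  exact mem_Coplus_of_reach_of_reach hC hEc hsp hf hsink hR₀τ hτ .refl

open CQA in
/-- for a sink C of a splittable f-closed graph, C⁺ = C^⊕. -/
theorem stmt_14 {V : Type*} [Fintype V] (E Ec : Set (V × V)) (hEc : Ec ⊆ E)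
    (hsp : Splittable E Ec) (hf : FClosed E Ec)
    (C : Set (V × V)) (hsink : IsSink E (E \ Ec) Ec C) :
    Cplus E C = Coplus Ec C :=
  stmt_14_general E Ec hEc hsp hf C hsink
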